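/- Let X be a shift space over A, σ : A* → B* an injective strongly left proper morphism with first letter ℓ, Y the image of X under σ, and u a nonempty word of L(Y) in which ℓ occurs, with unique decomposition u = sσ(v)p (v ∈ L(X) the antecedent of u, s a proper suffix of σ(a) and p a nonempty prefix of σ(b) for some (a,b) ∈ E_X(v)). Then E_Y(u) = {(a',b') ∈ B×B : there exists (a,b) ∈ E_X(v) such that a's is a suffix of σ(a) and pb' is a prefix of σ(b)ℓ}. -/

import Mathlib

open Classical

/-! ### Basic shift-space definitions -/

/-- The shift map `S` on bi-infinite words over `A`. -/
def shiftMap (A : Type*) : (ℤ → A) → (ℤ → A) := fun x n => x (n + 1)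

/-- The product topology on `ℤ → A`, each copy of `A` carrying the discrete topology. -/
def seqTop (A : Type*) : TopologicalSpace (ℤ → A) :=
  @Pi.topologicalSpace ℤ (fun _ => A) (fun _ => ⊥)

/-- A shift space: a closed, shift-invariant subset of `A^ℤ`. -/
def IsShiftSpace {A : Type*} (X : Set (ℤ → A)) : Prop :=
  @IsClosed _ (seqTop A) X ∧ shiftMap A '' X = X

/-- A minimal shift space: the only closed shift-invariant subsets are `∅` and `X`. -/
def IsMinimalShift {A : Type*} (X : Set (ℤ → A)) : Prop :=
  IsShiftSpace X ∧
    ∀ Y : Set (ℤ → A), Y ⊆ X → @IsClosed _ (seqTop A) Y → shiftMap A '' Y = Y →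
      Y = ∅ ∨ Y = X

/-- The finite word `w` occurs as a factor of the bi-infinite word `x`. -/
def occursIn {A : Type*} (w : List A) (x : ℤ → A) : Prop :=
  ∃ i : ℤ, w = List.ofFn (fun k : Fin w.length => x (i + (k.val : ℤ)))

/-- The language of `X`: all finite factors of elements of `X`. -/
def language {A : Type*} (X : Set (ℤ → A)) : Set (List A) :=
  {w | ∃ x ∈ X, occursIn w x}

/-- The factor complexity `p_X(n)`. -/
noncomputable def complexity {A : Type*} (X : Set (ℤ → A)) (n : ℕ) : ℕ :=
  {w ∈ language X | w.length = n}.ncard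

/-- Left extensions `E⁻(w)` of `w` in `X`. -/
def extLeft {A : Type*} (X : Set (ℤ → A)) (w : List A) : Set A :=
  {a | (a :: w) ∈ language X}

/-- Right extensions `E⁺(w)` of `w` in `X`. -/
def extRight {A : Type*} (X : Set (ℤ → A)) (w : List A) : Set A :=
  {b | (w ++ [b]) ∈ language X}

/-- Bi-extensions `E(w)` of `w` in `X`. -/
def extBoth {A : Type*} (X : Set (ℤ → A)) (w : List A) : Set (A × A) :=
  {p | (p.1 :: (w ++ [p.2])) ∈ language X}

def LeftSpecial {A : Type*} (X : Set (ℤ → A)) (w : List A) : Prop :=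
  2 ≤ (extLeft X w).ncard

def RightSpecial {A : Type*} (X : Set (ℤ → A)) (w : List A) : Prop :=
  2 ≤ (extRight X w).ncard

def Bispecial {A : Type*} (X : Set (ℤ → A)) (w : List A) : Prop :=
  LeftSpecial X w ∧ RightSpecial X w

/-! ### Extension graphs -/

/-- The bipartite graph on `A ⊕ A` (left copy ⊕ right copy) whose edges are given
by a set `E` of pairs. -/
def pairGraph {A : Type*} (E : Set (A × A)) : SimpleGraph (A ⊕ A) :=
  SimpleGraph.fromRel (fun u v => ∃ a b, u = Sum.inl a ∧ v = Sum.inr b ∧ (a, b) ∈ E)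

/-- The vertices of `A ⊕ A` incident to some edge of `E`. -/
def pairSupport {A : Type*} (E : Set (A × A)) : Set (A ⊕ A) :=
  Sum.inl '' {a | ∃ b, (a, b) ∈ E} ∪ Sum.inr '' {b | ∃ a, (a, b) ∈ E}

/-- The vertex set of the extension graph of `w`: `E⁻(w) ⊔ E⁺(w)`. -/
def extVertices {A : Type*} (X : Set (ℤ → A)) (w : List A) : Set (A ⊕ A) :=
  Sum.inl '' extLeft X w ∪ Sum.inr '' extRight X w

/-- `w` is dendric in `X`: its extension graph is a tree. -/
def IsDendric {A : Type*} (X : Set (ℤ → A)) (w : List A) : Prop :=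
  ((pairGraph (extBoth X w)).induce (extVertices X w)).IsTree

/-- A dendric shift: a shift space all of whose factors are dendric. -/
def IsDendricShift {A : Type*} (X : Set (ℤ → A)) : Prop :=
  IsShiftSpace X ∧ ∀ w ∈ language X, IsDendric X w

/-- The graph with edge set `E` and vertices those incident to an edge, is a tree. -/
def restrictedIsTree {A : Type*} (E : Set (A × A)) : Prop :=
  ((pairGraph E).induce (pairSupport E)).IsTree

/-- An ordinary bispecial factor. -/
def Ordinary {A : Type*} (X : Set (ℤ → A)) (w : List A) : Prop :=
  Bispecial X w ∧ ∃ p ∈ extBoth X w, ∀ q ∈ extBoth X w, q.1 = p.1 ∨ q.2 = p.2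

/-- An Arnoux-Rauzy shift over `A`. -/
def IsArnouxRauzy {A : Type*} (X : Set (ℤ → A)) : Prop :=
  IsMinimalShift X ∧ ∀ n : ℕ, 1 ≤ n →
    (∃! u : List A, u ∈ language X ∧ u.length = n ∧ LeftSpecial X u) ∧
    (∃! v : List A, v ∈ language X ∧ v.length = n ∧ RightSpecial X v) ∧
    (∀ u ∈ language X, u.length = n → LeftSpecial X u → extLeft X u = Set.univ) ∧
    (∀ v ∈ language X, v.length = n → RightSpecial X v → extRight X v = Set.univ)

/-! ### Morphisms -/

/-- Apply a morphism (given by its images of letters) to a finite word. -/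
def applyWord {A B : Type*} (σ : A → List B) (w : List A) : List B :=
  (w.map σ).flatten

def NonErasing {A B : Type*} (σ : A → List B) : Prop := ∀ a, σ a ≠ []

/-- `σ` is strongly left proper with first letter `ℓ`: every `σ a` starts with `ℓ`
and `ℓ` occurs exactly once in `σ a`. -/
def StronglyLeftProper {A B : Type*} (σ : A → List B) (ℓ : B) : Prop :=
  ∀ a, ∃ w : List B, σ a = ℓ :: w ∧ ℓ ∉ w

/-- Apply a (non-erasing) morphism to a bi-infinite word, anchored so that
`σ (x 0)` starts at index `0`. -/
noncomputable def applyPoint {A B : Type*} [Nonempty B] (σ : A → List B) (x : ℤ → A) :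
    ℤ → B := fun m =>
  letI : Inhabited B := Classical.inhabited_of_nonempty inferInstance
  if 0 ≤ m then
    (applyWord σ (List.ofFn (fun k : Fin (m.toNat + 1) => x (k.val : ℤ)))).getD m.toNat default
  else
    let K := (-m).toNat
    let L := applyWord σ (List.ofFn (fun k : Fin K => x ((k.val : ℤ) - (K : ℤ))))
    L.getD ((L.length : ℤ) + m).toNat default

/-- The image of a shift space `X` under the morphism `σ`:
`Y = {S^k σ(x) : x ∈ X, 0 ≤ k < |σ(x₀)|}`. -/
def shiftImage {A B : Type*} [Nonempty B] (σ : A → List B) (X : Set (ℤ → A)) :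
    Set (ℤ → B) :=
  {y | ∃ x ∈ X, ∃ k : ℕ, k < (σ (x 0)).length ∧ y = (shiftMap B)^[k] (applyPoint σ x)}

/-- `u` is an extended image of `v` under the injective strongly left proper
morphism `σ` (with first letter `ℓ`). -/
def ExtendedImage {A B : Type*} [Nonempty B] (σ : A → List B) (ℓ : B)
    (X : Set (ℤ → A)) (v : List A) (u : List B) : Prop :=
  u ∈ language (shiftImage σ X) ∧ u ≠ [] ∧ ℓ ∈ u ∧ v ∈ language X ∧
    ∃ (s p : List B) (a b : A), u = s ++ applyWord σ v ++ p ∧ (a, b) ∈ extBoth X v ∧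
      s <:+ σ a ∧ s ≠ σ a ∧ p ≠ [] ∧ p <+: σ b

/-- `σ` is dendric preserving for the factor `v` of `X`: every bispecial extended
image of `v` is dendric in the image shift. -/
def DendricPreservingFor {A B : Type*} [Nonempty B] (σ : A → List B) (ℓ : B)
    (X : Set (ℤ → A)) (v : List A) : Prop :=
  ∀ u, ExtendedImage σ ℓ X v u → Bispecial (shiftImage σ X) u →
    IsDendric (shiftImage σ X) u

/-! ### Longest common prefixes and suffixes -/

/-- Longest common prefix of two words. -/
def lcp {B : Type*} [DecidableEq B] : List B → List B → List B
  | a :: l, b :: m => if a = b then a :: lcp l m else []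
  | _, _ => []

/-- Longest common suffix of two words. -/
def lcs {B : Type*} [DecidableEq B] (l m : List B) : List B :=
  (lcp l.reverse m.reverse).reverse

/-- `T⁻(σ)`: longest common suffixes of images of distinct letters. -/
def Tminus {A B : Type*} [DecidableEq B] (σ : A → List B) : Set (List B) :=
  {s | ∃ a₁ a₂ : A, a₁ ≠ a₂ ∧ s = lcs (σ a₁) (σ a₂)}

/-- `T⁺(σ)`: longest common prefixes of images of distinct letters. -/
def Tplus {A B : Type*} [DecidableEq B] (σ : A → List B) : Set (List B) :=
  {p | ∃ b₁ b₂ : A, b₁ ≠ b₂ ∧ p = lcp (σ b₁) (σ b₂)}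

/-- `T⁻_v(σ)`. -/
def TminusV {A B : Type*} [DecidableEq B] (σ : A → List B) (X : Set (ℤ → A))
    (v : List A) : Set (List B) :=
  {s | ∃ a₁ a₂ : A, a₁ ≠ a₂ ∧ a₁ ∈ extLeft X v ∧ a₂ ∈ extLeft X v ∧
    s = lcs (σ a₁) (σ a₂)}

/-- `T⁺_v(σ)`. -/
def TplusV {A B : Type*} [DecidableEq B] (σ : A → List B) (X : Set (ℤ → A))
    (v : List A) : Set (List B) :=
  {p | ∃ b₁ b₂ : A, b₁ ≠ b₂ ∧ b₁ ∈ extRight X v ∧ b₂ ∈ extRight X v ∧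
    p = lcp (σ b₁) (σ b₂)}

/-- `E⁻_{X,s}(v)`. -/
def extLeftS {A B : Type*} (σ : A → List B) (X : Set (ℤ → A)) (v : List A)
    (s : List B) : Set A :=
  {a ∈ extLeft X v | s <:+ σ a}

/-- `E⁺_{X,p}(v)`. -/
def extRightP {A B : Type*} (σ : A → List B) (ℓ : B) (X : Set (ℤ → A)) (v : List A)
    (p : List B) : Set A :=
  {b ∈ extRight X v | p <+: (σ b ++ [ℓ])}

/-- `E_{X,s,p}(v)`. -/
def extBothSP {A B : Type*} (σ : A → List B) (ℓ : B) (X : Set (ℤ → A)) (v : List A)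
    (s p : List B) : Set (A × A) :=
  {q ∈ extBoth X v | q.1 ∈ extLeftS σ X v s ∧ q.2 ∈ extRightP σ ℓ X v p}

/-- `σ` is left-invariant: `T⁻(σ)` is a singleton. -/
def LeftInvariant {A B : Type*} [DecidableEq B] (σ : A → List B) : Prop :=
  ∃ s, Tminus σ = {s}

/-- `σ` is right-invariant: `T⁺(σ)` is a singleton. -/
def RightInvariant {A B : Type*} [DecidableEq B] (σ : A → List B) : Prop :=
  ∃ p, Tplus σ = {p}

/-! ### The sets `C⁻` and `C⁺` -/

/-- Edges of `E` not incident to the left vertex `a`. -/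
def delLeft {A : Type*} (E : Set (A × A)) (a : A) : Set (A × A) := {p ∈ E | p.1 ≠ a}

/-- Edges of `E` not incident to the right vertex `b`. -/
def delRight {A : Type*} (E : Set (A × A)) (b : A) : Set (A × A) := {p ∈ E | p.2 ≠ b}

/-- `C⁻_X(v)`: letters `a` whose deletion (as a left vertex, removing resulting
isolated vertices) disconnects the extension graph of `v`. -/
def Cminus {A : Type*} (X : Set (ℤ → A)) (v : List A) : Set A :=
  {a | ¬ ((pairGraph (delLeft (extBoth X v) a)).induce
      (pairSupport (delLeft (extBoth X v) a))).Preconnected}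

/-- `C⁺_X(v)`. -/
def Cplus {A : Type*} (X : Set (ℤ → A)) (v : List A) : Set A :=
  {b | ¬ ((pairGraph (delRight (extBoth X v) b)).induce
      (pairSupport (delRight (extBoth X v) b))).Preconnected}

/-- `C⁻(X) = ⋃_{v ∈ L(X)} C⁻_X(v)`. -/
def CminusShift {A : Type*} (X : Set (ℤ → A)) : Set A :=
  {a | ∃ v ∈ language X, a ∈ Cminus X v}

/-- `C⁺(X)`. -/
def CplusShift {A : Type*} (X : Set (ℤ → A)) : Set A :=
  {b | ∃ v ∈ language X, b ∈ Cplus X v}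

/-! ### The ternary alphabet and the set `S₃` -/

/-- `α : 1↦1, 2↦12, 3↦13` (letters `1,2,3` are `0,1,2 : Fin 3`). -/
def mAlpha : Fin 3 → List (Fin 3) := ![[0], [0, 1], [0, 2]]

/-- `β : 1↦1, 2↦12, 3↦132`. -/
def mBeta : Fin 3 → List (Fin 3) := ![[0], [0, 1], [0, 2, 1]]

/-- `γ : 1↦1, 2↦12, 3↦123`. -/
def mGamma : Fin 3 → List (Fin 3) := ![[0], [0, 1], [0, 1, 2]]

/-- `δ⁽ᵏ⁾ : 1↦1, 2↦123^k, 3↦123^{k+1}`. -/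
def mDelta (k : ℕ) : Fin 3 → List (Fin 3) :=
  ![[0], [0, 1] ++ List.replicate k 2, [0, 1] ++ List.replicate (k + 1) 2]

/-- `ζ⁽ᵏ⁾ : 1↦13^k, 2↦12, 3↦13^{k+1}`. -/
def mZeta (k : ℕ) : Fin 3 → List (Fin 3) :=
  ![0 :: List.replicate k 2, [0, 1], 0 :: List.replicate (k + 1) 2]

/-- `η : 1↦13, 2↦12, 3↦123`. -/
def mEta : Fin 3 → List (Fin 3) := ![[0, 2], [0, 1], [0, 1, 2]]

/-- The set `S₃` of morphisms. -/
def S3Set : Set (Fin 3 → List (Fin 3)) :=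
  {mAlpha, mBeta, mGamma, mEta} ∪ {σ | ∃ k, 1 ≤ k ∧ (σ = mDelta k ∨ σ = mZeta k)}

/-- `S_LI = {α, γ}`. -/
def SLISet : Set (Fin 3 → List (Fin 3)) := {mAlpha, mGamma}

/-- `S_RI = {α, β}`. -/
def SRISet : Set (Fin 3 → List (Fin 3)) := {mAlpha, mBeta}

/-- The morphism induced by a permutation of the alphabet. -/
def permMorph (π : Equiv.Perm (Fin 3)) : Fin 3 → List (Fin 3) := fun a => [π a]

/-- Composition of morphisms (as substitutions). -/
def compMorph {A B C : Type*} (τ : B → List C) (σ : A → List B) : A → List C :=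
  fun a => applyWord τ (σ a)

/-- `Σ₃ T Σ₃` for a set `T` of morphisms of `A₃*`. -/
def SigmaSSigma (T : Set (Fin 3 → List (Fin 3))) : Set (Fin 3 → List (Fin 3)) :=
  {σ | ∃ (π π' : Equiv.Perm (Fin 3)) (τ : Fin 3 → List (Fin 3)), τ ∈ T ∧
    σ = compMorph (permMorph π) (compMorph τ (permMorph π'))}

/-! ### S-adic representations -/

/-- `prodMorph σ m n = σ_m ∘ σ_{m+1} ∘ ⋯ ∘ σ_{m+n-1}` (as substitutions). -/
def prodMorph {A : Type*} (σ : ℕ → A → List A) : ℕ → ℕ → A → List A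
  | _, 0 => fun a => [a]
  | m, n + 1 => compMorph (σ m) (prodMorph σ (m + 1) n)

/-- The language of level `n` of a directive sequence (0-indexed: `levelLang σ 0`
is the language of level 1 of the paper). -/
def levelLang {A : Type*} (σ : ℕ → A → List A) (n : ℕ) : Set (List A) :=
  {w | ∃ (m : ℕ) (a : A), 0 < m ∧ w <:+: prodMorph σ n m a}

/-- The shift space `X_σ^{(n+1)}` generated by the language of level `n+1`. -/
def levelShift {A : Type*} (σ : ℕ → A → List A) (n : ℕ) : Set (ℤ → A) :=
  {x | ∀ w, occursIn w x → w ∈ levelLang σ n}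

/-- The growth condition `max_a |σ_{[1,n)}(a)| → ∞`. -/
def SAdicGrowth {A : Type*} [Fintype A] (σ : ℕ → A → List A) : Prop :=
  Filter.Tendsto (fun n => Finset.univ.sup fun a : A => (prodMorph σ 0 n a).length)
    Filter.atTop Filter.atTop

/-- `σ` is an S-adic representation of `X`. -/
def IsSAdicRep {A : Type*} [Fintype A] (σ : ℕ → A → List A) (X : Set (ℤ → A)) : Prop :=
  SAdicGrowth σ ∧ X = levelShift σ 0

/-- Primitivity of a directive sequence. -/
def PrimitiveSeq {A : Type*} (σ : ℕ → A → List A) : Prop :=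
  ∀ n, ∃ m, 0 < m ∧ ∀ a b : A, a ∈ prodMorph σ n m b

/-- `X` is a shift space over `A₃`: every letter belongs to the language. -/
def ShiftOver3 (X : Set (ℤ → Fin 3)) : Prop := ∀ a : Fin 3, [a] ∈ language X

/-- A minimal dendric shift over `A₃`. -/
def MinimalDendric3 (X : Set (ℤ → Fin 3)) : Prop :=
  IsMinimalShift X ∧ (∀ w ∈ language X, IsDendric X w) ∧ ShiftOver3 X

/-! ### Induced transformations -/

/-- `I` is recurrent for `T`. -/
def RecurrentSet {Ω : Type*} (T : Ω → Ω) (I : Set Ω) : Prop :=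
  ∀ x ∈ I, ∃ n, 0 < n ∧ T^[n] x ∈ I

/-- First return time of `x` to `I` under `T`. -/
noncomputable def returnTime {Ω : Type*} (T : Ω → Ω) (I : Set Ω) (x : Ω) : ℕ :=
  sInf {n | 0 < n ∧ T^[n] x ∈ I}

/-- The transformation induced by `T` on `I`. -/
noncomputable def inducedMap {Ω : Type*} (T : Ω → Ω) (I : Set Ω) : Ω → Ω :=
  fun x => T^[returnTime T I x] x

/-- The Arnoux-Rauzy morphism `α_a : a ↦ a, b ↦ ab (b ≠ a)`. -/
def arAlpha {A : Type*} [DecidableEq A] (a : A) : A → List A :=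
  fun b => if b = a then [a] else [a, b]

/-- The Arnoux-Rauzy morphism `ᾱ_a : a ↦ a, b ↦ ba (b ≠ a)`. -/
def arAlphaBar {A : Type*} [DecidableEq A] (a : A) : A → List A :=
  fun b => if b = a then [a] else [b, a]


/-! Because `ℓ` occurs in every `σ a` exactly once, as its first letter, the occurrences of `ℓ`
in `σ z` are exactly the boundaries between the blocks `σ (z i)`. An occurrence of `c u d` in
`σ z` therefore cuts `z` as `z' a₀ v b₀ z''`, where `c s` is a suffix of `σ a₀` (as `s` is
`ℓ`-free), `p d` is a prefix of `σ b₀ ℓ` (as `p` starts with `ℓ` and is otherwise `ℓ`-free), and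
injectivity of `σ` identifies the blocks in between with `v`. Conversely `c u d` is a factor of
`σ (a₀ v b₀ b₁)` for any right extension `b₁`. Since the factors of `Y` are exactly the factors of
the words `σ z`, `z ∈ L(X)`, this describes `E_Y(u)`. -/

section Words
variable {B : Type*} {ℓ c d : B}

theorem cons_suffix_of_cons_suffix_append_cons {s m t : List B} (hs : ℓ ∉ s)
    (h : c :: s <:+ m ++ ℓ :: t) : c :: s <:+ ℓ :: t := by
  rcases List.suffix_or_suffix_of_suffix h (List.suffix_append m (ℓ :: t)) with h' | h'
  · exact h'
  · rcases List.suffix_cons_iff.mp h' with h'' | h''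
    · exact h'' ▸ List.suffix_refl _
    · exact absurd (h''.subset List.mem_cons_self) hs

theorem append_singleton_prefix_of_prefix_append_cons {w t m : List B} (hw : ℓ ∉ w)
    (h : w ++ [d] <+: t ++ ℓ :: m) : w ++ [d] <+: t ++ [ℓ] := by
  have ht : t ++ [ℓ] <+: t ++ ℓ :: m := (List.prefix_append_right_inj t).mpr (by simp)
  rcases List.prefix_or_prefix_of_prefix h ht with h' | h'
  · exact h'
  · rcases List.prefix_concat_iff.mp h' with h'' | h''
    · exact h'' ▸ List.prefix_refl _
    · exact absurd (h''.subset (by simp)) hw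

theorem exists_eq_append_of_append_eq_append_cons {t r α γ : List B} (ht : ℓ ∉ t)
    (h : t ++ r = α ++ ℓ :: γ) : ∃ α', α = t ++ α' ∧ r = α' ++ ℓ :: γ := by
  rcases List.append_eq_append_iff.mp h with ⟨α', rfl, hr⟩ | ⟨c', rfl, hc'⟩
  · exact ⟨α', rfl, hr⟩
  · cases c' with
    | nil => exact ⟨[], by simp, by simpa using hc'.symm⟩
    | cons e c' =>
      obtain ⟨rfl, -⟩ := List.cons_eq_cons.mp hc'
      simp at ht

end Words

section Morphism
variable {A B : Type*} (σ : A → List B)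

@[simp] theorem applyWord_nil : applyWord σ [] = [] := rfl

@[simp] theorem applyWord_cons (a : A) (z : List A) :
    applyWord σ (a :: z) = σ a ++ applyWord σ z := by
  simp [applyWord]

@[simp] theorem applyWord_append (z z' : List A) :
    applyWord σ (z ++ z') = applyWord σ z ++ applyWord σ z' := by
  simp [applyWord]

theorem applyWord_singleton (a : A) : applyWord σ [a] = σ a := by
  simp

variable {σ}

theorem NonErasing.length_le_length_applyWord (hσ : NonErasing σ) (z : List A) :
    z.length ≤ (applyWord σ z).length := by
  induction z with
  | nil => simp
  | cons a z ih =>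
    have := List.length_pos_iff.mpr (hσ a)
    simp only [applyWord_cons, List.length_append, List.length_cons]
    omega

end Morphism

namespace StronglyLeftProper
variable {A B : Type*} {σ : A → List B} {ℓ c d : B} {s w : List B}

theorem nonErasing (hσ : StronglyLeftProper σ ℓ) : NonErasing σ := fun a => by
  obtain ⟨t, ht, -⟩ := hσ a
  simp [ht]

theorem not_mem_of_suffix_of_ne (hσ : StronglyLeftProper σ ℓ) {a : A} (hs : s <:+ σ a)
    (hs' : s ≠ σ a) : ℓ ∉ s := by
  obtain ⟨t, ht, hℓt⟩ := hσ a
  rw [ht] at hs hs'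
  exact fun h => hℓt ((List.suffix_cons_iff.mp hs).resolve_left hs' |>.subset h)

theorem exists_eq_cons_of_prefix (hσ : StronglyLeftProper σ ℓ) {a : A} {p : List B}
    (hp : p ≠ []) (hp' : p <+: σ a) : ∃ w, p = ℓ :: w ∧ ℓ ∉ w := by
  obtain ⟨t, ht, hℓt⟩ := hσ a
  rw [ht] at hp'
  cases p with
  | nil => exact absurd rfl hp
  | cons e w =>
    obtain ⟨rfl, hw⟩ := List.cons_prefix_cons.mp hp'
    exact ⟨w, rfl, fun h => hℓt (hw.subset h)⟩

theorem exists_applyWord_append_singleton_eq_cons (hσ : StronglyLeftProper σ ℓ)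
    (z : List A) : ∃ m, applyWord σ z ++ [ℓ] = ℓ :: m := by
  cases z with
  | nil => exact ⟨[], rfl⟩
  | cons a z =>
    obtain ⟨t, ht, -⟩ := hσ a
    exact ⟨t ++ applyWord σ z ++ [ℓ], by simp [ht]⟩

/-- Synchronisation: every occurrence of `ℓ` in `σ z` starts the image of a letter of `z`. -/
theorem exists_split_of_applyWord_eq (hσ : StronglyLeftProper σ ℓ) {z : List A}
    {α γ : List B} (h : applyWord σ z = α ++ ℓ :: γ) :
    ∃ z₁ z₂, z = z₁ ++ z₂ ∧ applyWord σ z₁ = α ∧ applyWord σ z₂ = ℓ :: γ := by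
  induction z generalizing α with
  | nil => simp at h
  | cons a z ih =>
    obtain ⟨t, ht, hℓt⟩ := hσ a
    rw [applyWord_cons, ht, List.cons_append] at h
    cases α with
    | nil => exact ⟨[], a :: z, rfl, rfl, by simpa [ht] using h⟩
    | cons e α =>
      simp only [List.cons_append, List.cons.injEq] at h
      obtain ⟨rfl, h⟩ := h
      obtain ⟨α', rfl, h'⟩ := exists_eq_append_of_append_eq_append_cons hℓt h
      obtain ⟨z₁, z₂, rfl, h₁, h₂⟩ := ih h'
      exact ⟨a :: z₁, z₂, rfl, by simp [ht, h₁], h₂⟩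

theorem exists_eq_append_of_applyWord_eq_append (hσ : StronglyLeftProper σ ℓ)
    (hinj : Function.Injective (applyWord σ)) {z v : List A} {α : List B}
    (h : applyWord σ z = α ++ applyWord σ v) : ∃ z', z = z' ++ v ∧ applyWord σ z' = α := by
  cases v with
  | nil => exact ⟨z, by simp, by simpa using h⟩
  | cons b v =>
    obtain ⟨t, ht, -⟩ := hσ b
    rw [applyWord_cons, ht, List.cons_append] at h
    obtain ⟨z₁, z₂, rfl, h₁, h₂⟩ := exists_split_of_applyWord_eq hσ h
    obtain rfl : z₂ = b :: v := hinj (by simp [h₂, ht])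
    exact ⟨z₁, rfl, h₁⟩

theorem exists_cons_suffix_of_applyWord_eq (hσ : StronglyLeftProper σ ℓ) (hs : ℓ ∉ s)
    {z : List A} {α : List B} (h : applyWord σ z = α ++ c :: s) :
    ∃ z' a, z = z' ++ [a] ∧ c :: s <:+ σ a := by
  rcases List.eq_nil_or_concat' z with rfl | ⟨z', a, rfl⟩
  · simp at h
  obtain ⟨t, ht, -⟩ := hσ a
  refine ⟨z', a, rfl, ht ▸ cons_suffix_of_cons_suffix_append_cons (m := applyWord σ z') hs ?_⟩
  rw [← ht, ← applyWord_singleton σ, ← applyWord_append, h]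
  exact List.suffix_append α _

theorem cons_append_prefix_of_prefix_applyWord (hσ : StronglyLeftProper σ ℓ) (hw : ℓ ∉ w)
    {b : A} {z : List A} (h : ℓ :: w ++ [d] <+: applyWord σ (b :: z)) :
    ℓ :: w ++ [d] <+: σ b ++ [ℓ] := by
  obtain ⟨t, ht, -⟩ := hσ b
  obtain ⟨m, hm⟩ := exists_applyWord_append_singleton_eq_cons hσ z
  have e : applyWord σ (b :: z) ++ [ℓ] = ℓ :: (t ++ ℓ :: m) := by
    rw [applyWord_cons, ht, List.cons_append, List.cons_append, List.append_assoc, hm]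
  have h' : ℓ :: (w ++ [d]) <+: ℓ :: (t ++ ℓ :: m) := e ▸ h.trans (List.prefix_append _ [ℓ])
  rw [ht, List.cons_append, List.cons_append, List.cons_prefix_cons]
  exact ⟨rfl, append_singleton_prefix_of_prefix_append_cons hw (List.cons_prefix_cons.mp h').2⟩

theorem exists_extension_of_infix_applyWord (hσ : StronglyLeftProper σ ℓ)
    (hinj : Function.Injective (applyWord σ)) (hs : ℓ ∉ s) (hw : ℓ ∉ w) {v z : List A}
    (h : c :: (s ++ applyWord σ v ++ ℓ :: w ++ [d]) <:+: applyWord σ z) :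
    ∃ a₀ b₀, a₀ :: (v ++ [b₀]) <:+: z ∧ c :: s <:+ σ a₀ ∧ ℓ :: w ++ [d] <+: σ b₀ ++ [ℓ] := by
  obtain ⟨α, β, h⟩ := h
  have h' : applyWord σ z = (α ++ c :: s ++ applyWord σ v) ++ ℓ :: (w ++ d :: β) := by
    rw [← h]; simp
  obtain ⟨z₁, z₂, rfl, h₁, h₂⟩ := exists_split_of_applyWord_eq hσ h'
  obtain ⟨b₀, z₃, rfl⟩ : ∃ b₀ z₃, z₂ = b₀ :: z₃ := by
    cases z₂ with
    | nil => simp at h₂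
    | cons b₀ z₃ => exact ⟨b₀, z₃, rfl⟩
  have hright : ℓ :: w ++ [d] <+: σ b₀ ++ [ℓ] :=
    cons_append_prefix_of_prefix_applyWord hσ hw (z := z₃) ⟨β, by rw [h₂]; simp⟩
  obtain ⟨z₄, rfl, h₄⟩ := exists_eq_append_of_applyWord_eq_append hσ hinj h₁
  obtain ⟨z₅, a₀, rfl, hleft⟩ := exists_cons_suffix_of_applyWord_eq hσ hs h₄
  exact ⟨a₀, b₀, ⟨z₅, z₃, by simp⟩, hleft, hright⟩

theorem infix_applyWord_of_extension (hσ : StronglyLeftProper σ ℓ) {a₀ b₀ b₁ : A}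
    {v : List A} {p : List B} (hs : c :: s <:+ σ a₀) (hp : p ++ [d] <+: σ b₀ ++ [ℓ]) :
    c :: (s ++ applyWord σ v ++ p ++ [d]) <:+: applyWord σ (a₀ :: (v ++ [b₀]) ++ [b₁]) := by
  obtain ⟨t, ht⟩ := hs
  obtain ⟨t₁, ht₁, -⟩ := hσ b₁
  obtain ⟨r, hr⟩ := hp.trans ((List.prefix_append_right_inj (σ b₀)).mpr
    (show [ℓ] <+: σ b₁ from ht₁ ▸ List.cons_prefix_cons.mpr ⟨rfl, List.nil_prefix⟩))
  refine ⟨t, r, ?_⟩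
  simp only [List.cons_append, applyWord_append, applyWord_cons, applyWord_nil, List.append_nil,
    ← ht, ← List.append_assoc] at hr ⊢
  rw [List.append_assoc _ (σ b₀), ← hr]
  simp

end StronglyLeftProper

section Window
variable {A : Type*}

def window (x : ℤ → A) (i : ℤ) (n : ℕ) : List A := List.ofFn fun k : Fin n => x (i + k)

@[simp] theorem length_window (x : ℤ → A) (i : ℤ) (n : ℕ) : (window x i n).length = n := by
  simp [window]

@[simp] theorem getElem_window (x : ℤ → A) (i : ℤ) (n j : ℕ) (hj : j < (window x i n).length) :
    (window x i n)[j] = x (i + j) := by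
  simp [window]

theorem window_add (x : ℤ → A) (i : ℤ) (n m : ℕ) :
    window x i (n + m) = window x i n ++ window x (i + n) m := by
  refine List.ext_getElem (by simp) fun j h₁ h₂ => ?_
  rcases lt_or_ge j n with hj | hj
  · rw [List.getElem_append_left (by simpa using hj)]
    simp
  · rw [List.getElem_append_right (by simpa using hj)]
    simp only [getElem_window, length_window]
    congr 1
    omega

theorem window_infix_window {x : ℤ → A} {i j : ℤ} {m n : ℕ} (hij : i ≤ j)
    (hjm : j + m ≤ i + n) : window x j m <:+: window x i n := by
  obtain ⟨a, rfl⟩ : ∃ a : ℕ, j = i + a := ⟨(j - i).toNat, by omega⟩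
  obtain ⟨r, rfl⟩ : ∃ r : ℕ, n = a + m + r := ⟨n - a - m, by omega⟩
  exact ⟨window x i a, window x (i + a + m) r,
    by rw [window_add, window_add, Nat.cast_add, add_assoc]⟩

theorem exists_eq_window_of_infix {x : ℤ → A} {i : ℤ} {n : ℕ} {w : List A}
    (h : w <:+: window x i n) : ∃ j, w = window x j w.length := by
  obtain ⟨t, r, h⟩ := h
  have hn : n = t.length + w.length + r.length := by
    simpa [add_assoc] using congrArg List.length h.symm
  rw [hn, window_add, window_add] at h
  exact ⟨_, (List.append_inj (List.append_inj h (by simp)).1 (by simp)).2⟩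

theorem window_comp_add_right (x : ℤ → A) (c i : ℤ) (n : ℕ) :
    window (fun m => x (m + c)) i n = window x (i + c) n := by
  refine List.ext_getElem (by simp) fun j _ _ => ?_
  simp only [getElem_window]
  congr 1
  ring

theorem iterate_shiftMap (x : ℤ → A) (k : ℕ) : (shiftMap A)^[k] x = fun m => x (m + k) := by
  induction k generalizing x with
  | zero => simp
  | succ k ih =>
    funext m
    rw [Function.iterate_succ_apply, ih]
    simp only [shiftMap]
    congr 1
    push_cast
    ring

end Window

section Language
variable {A : Type*} {X : Set (ℤ → A)} {w w' : List A}

theorem mem_language_iff : w ∈ language X ↔ ∃ x ∈ X, ∃ i, w = window x i w.length :=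
  Iff.rfl

theorem window_mem_language {x : ℤ → A} (hx : x ∈ X) (i : ℤ) (n : ℕ) :
    window x i n ∈ language X :=
  mem_language_iff.mpr ⟨x, hx, i, by simp⟩

theorem mem_language_of_infix (h : w ∈ language X) (h' : w' <:+: w) : w' ∈ language X := by
  obtain ⟨x, hx, i, hw⟩ := mem_language_iff.mp h
  obtain ⟨j, hj⟩ := exists_eq_window_of_infix (hw ▸ h')
  exact hj ▸ window_mem_language hx j _

theorem exists_append_singleton_mem_language (h : w ∈ language X) :
    ∃ b, w ++ [b] ∈ language X := by
  obtain ⟨x, hx, i, hw⟩ := mem_language_iff.mp h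
  refine ⟨x (i + w.length), ?_⟩
  have : w ++ [x (i + w.length)] = window x i (w.length + 1) := by
    rw [window_add, ← hw]
    simp [window]
  exact this ▸ window_mem_language hx i _

theorem IsShiftSpace.comp_add_right_mem (hX : IsShiftSpace X) {x : ℤ → A} (hx : x ∈ X)
    (i : ℤ) : (fun m => x (m + i)) ∈ X := by
  have hmaps : Set.MapsTo (shiftMap A) X X := fun y hy => hX.2 ▸ Set.mem_image_of_mem _ hy
  have hsurj : Set.SurjOn (shiftMap A) X X := by
    simpa [hX.2] using Set.surjOn_image (shiftMap A) X
  obtain ⟨x', hx', rfl⟩ := hsurj.iterate i.natAbs hx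
  have := hmaps.iterate (i + i.natAbs).toNat hx'
  rw [iterate_shiftMap] at this ⊢
  convert this using 2 with m
  show x' (m + i + i.natAbs) = x' (m + (i + i.natAbs).toNat)
  congr 1
  omega

theorem IsShiftSpace.exists_eq_window_zero (hX : IsShiftSpace X) (h : w ∈ language X) :
    ∃ x ∈ X, w = window x 0 w.length := by
  obtain ⟨x, hx, i, hw⟩ := mem_language_iff.mp h
  exact ⟨_, hX.comp_add_right_mem hx i, by rw [window_comp_add_right, zero_add, ← hw]⟩

end Language

section ApplyPoint
variable {A B : Type*} {σ : A → List B}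

theorem applyWord_window_prefix (σ : A → List B) (x : ℤ → A) (i : ℤ) {n n' : ℕ}
    (h : n ≤ n') : applyWord σ (window x i n) <+: applyWord σ (window x i n') := by
  obtain ⟨r, rfl⟩ := Nat.exists_eq_add_of_le h
  rw [window_add, applyWord_append]
  exact List.prefix_append _ _

theorem applyWord_window_neg_suffix (σ : A → List B) (x : ℤ → A) {n n' : ℕ} (h : n ≤ n') :
    applyWord σ (window x (-n) n) <:+ applyWord σ (window x (-n') n') := by
  obtain ⟨r, rfl⟩ := Nat.exists_eq_add_of_le' h
  rw [window_add, applyWord_append, show -((r + n : ℕ) : ℤ) + r = -n by push_cast; ring]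
  exact List.suffix_append _ _

variable [Nonempty B]

-- The default letter that `applyPoint` passes to `getD` is never read, hence the `∃ d`.
theorem applyPoint_natCast_eq_getD (x : ℤ → A) (j : ℕ) :
    ∃ d, applyPoint σ x j = (applyWord σ (window x 0 (j + 1))).getD j d := by
  refine ⟨Classical.arbitrary B, ?_⟩
  have hofn : List.ofFn (fun k : Fin (j + 1) => x (k : ℤ)) = window x 0 (j + 1) := by
    simp [window]
  simp only [applyPoint, Nat.cast_nonneg, if_true, Int.toNat_natCast, hofn]
  rfl

theorem applyPoint_neg_natCast_eq_getD (hσ : NonErasing σ) (x : ℤ → A) {K : ℕ} (hK : 0 < K) :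
    ∃ d, applyPoint σ x (-K) =
      (applyWord σ (window x (-K) K)).getD ((applyWord σ (window x (-K) K)).length - K) d := by
  refine ⟨Classical.arbitrary B, ?_⟩
  have hofn : List.ofFn (fun k : Fin K => x ((k : ℤ) - K)) = window x (-K) K := by
    simp [window, sub_eq_neg_add]
  have hKL := hσ.length_le_length_applyWord (window x (-K) K)
  rw [length_window] at hKL
  have hneg : ¬ (0 ≤ -(K : ℤ)) := by omega
  simp only [applyPoint, hneg, if_false, neg_neg, Int.toNat_natCast, Fin.val_cast, hofn]
  congr 1
  omega

theorem applyPoint_natCast (hσ : NonErasing σ) (x : ℤ → A) {N j : ℕ}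
    (hj : j < (applyWord σ (window x 0 N)).length) :
    applyPoint σ x j = (applyWord σ (window x 0 N))[j] := by
  have hlen : j < (applyWord σ (window x 0 (j + 1))).length :=
    (hσ.length_le_length_applyWord _).trans_lt' (by simp)
  obtain ⟨d, hd⟩ := applyPoint_natCast_eq_getD (σ := σ) x j
  rw [hd, List.getD_eq_getElem _ _ hlen]
  rcases le_total (j + 1) N with h | h
  · exact (applyWord_window_prefix σ x 0 h).getElem hlen
  · exact ((applyWord_window_prefix σ x 0 h).getElem hj).symm

theorem applyPoint_sub_length (hσ : NonErasing σ) (x : ℤ → A) {N j : ℕ}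
    (hj : j < (applyWord σ (window x (-N) N)).length) :
    applyPoint σ x (j - (applyWord σ (window x (-N) N)).length) =
      (applyWord σ (window x (-N) N))[j] := by
  obtain ⟨K, hK⟩ : ∃ K, K + j = (applyWord σ (window x (-N) N)).length :=
    ⟨_, Nat.sub_add_cancel hj.le⟩
  have hKL := hσ.length_le_length_applyWord (window x (-K) K)
  rw [length_window] at hKL
  have hlen :
      (applyWord σ (window x (-K) K)).length - K < (applyWord σ (window x (-K) K)).length := by
    omega
  obtain ⟨d, hd⟩ := applyPoint_neg_natCast_eq_getD hσ x (show 0 < K by omega)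
  rw [show (j : ℤ) - (applyWord σ (window x (-N) N)).length = -K by omega, hd,
    List.getD_eq_getElem _ _ hlen]
  rcases le_total K N with h | h
  · rw [(applyWord_window_neg_suffix σ x h).getElem hlen]
    have := (applyWord_window_neg_suffix σ x h).length_le
    congr 1
    omega
  · rw [(applyWord_window_neg_suffix σ x h).getElem hj]
    have := (applyWord_window_neg_suffix σ x h).length_le
    congr 1
    omega

theorem window_applyPoint_zero (hσ : NonErasing σ) (x : ℤ → A) (N : ℕ) :
    window (applyPoint σ x) 0 (applyWord σ (window x 0 N)).length = applyWord σ (window x 0 N) :=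
  List.ext_getElem (by simp) fun j _ hj => by
    rw [getElem_window, zero_add, applyPoint_natCast hσ x hj]

theorem window_applyPoint_neg (hσ : NonErasing σ) (x : ℤ → A) (N : ℕ) :
    window (applyPoint σ x) (-(applyWord σ (window x (-N) N)).length)
      (applyWord σ (window x (-N) N)).length = applyWord σ (window x (-N) N) :=
  List.ext_getElem (by simp) fun j _ hj => by
    rw [getElem_window, neg_add_eq_sub, applyPoint_sub_length hσ x hj]

theorem window_applyPoint (hσ : NonErasing σ) (x : ℤ → A) (N : ℕ) :
    window (applyPoint σ x) (-(applyWord σ (window x (-N) N)).length)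
      ((applyWord σ (window x (-N) N)).length + (applyWord σ (window x 0 N)).length) =
      applyWord σ (window x (-N) (N + N)) := by
  rw [window_add, neg_add_cancel, window_applyPoint_neg hσ, window_applyPoint_zero hσ,
    window_add x (-N), neg_add_cancel, applyWord_append]

variable {X : Set (ℤ → A)} {w : List B}

theorem applyWord_mem_language_shiftImage (hX : IsShiftSpace X) (hσ : NonErasing σ)
    {z : List A} (hz : z ∈ language X) : applyWord σ z ∈ language (shiftImage σ X) := by
  obtain ⟨x, hx, hz⟩ := hX.exists_eq_window_zero hz
  refine mem_language_iff.mpr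
    ⟨applyPoint σ x, ⟨x, hx, 0, List.length_pos_iff.mpr (hσ _), rfl⟩, 0, ?_⟩
  rw [hz]
  exact (window_applyPoint_zero hσ x z.length).symm

theorem exists_infix_applyWord_of_mem_language_shiftImage (hσ : NonErasing σ)
    (hw : w ∈ language (shiftImage σ X)) : ∃ z ∈ language X, w <:+: applyWord σ z := by
  obtain ⟨_, ⟨x, hx, k, -, rfl⟩, i, hw⟩ := mem_language_iff.mp hw
  rw [iterate_shiftMap, window_comp_add_right] at hw
  set N := (i + k).natAbs + w.length
  refine ⟨window x (-N) (N + N), window_mem_language hx _ _, ?_⟩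
  have h₁ := hσ.length_le_length_applyWord (window x (-N) N)
  have h₂ := hσ.length_le_length_applyWord (window x 0 N)
  simp only [length_window] at h₁ h₂
  rw [hw, ← window_applyPoint hσ x N]
  exact window_infix_window (by omega) (by omega)

end ApplyPoint

theorem statement_3_general {A B : Type*} [Nonempty B]
    (X : Set (ℤ → A)) (hX : IsShiftSpace X)
    (σ : A → List B) (ℓ : B)
    (hinj : Function.Injective (applyWord σ)) (hslp : StronglyLeftProper σ ℓ)
    (u : List B)
    (s p : List B) (v : List A) (a b : A)
    (hdec : u = s ++ applyWord σ v ++ p)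
    (hs : s <:+ σ a) (hs' : s ≠ σ a) (hp : p ≠ []) (hp' : p <+: σ b) :
    extBoth (shiftImage σ X) u =
      {q : B × B | ∃ a₀ b₀ : A, (a₀, b₀) ∈ extBoth X v ∧
        (q.1 :: s) <:+ σ a₀ ∧ (p ++ [q.2]) <+: (σ b₀ ++ [ℓ])} := by
  have hℓs : ℓ ∉ s := hslp.not_mem_of_suffix_of_ne hs hs'
  obtain ⟨w, rfl, hℓw⟩ := hslp.exists_eq_cons_of_prefix hp hp'
  subst hdec
  ext ⟨c, d⟩
  constructor
  · intro h
    obtain ⟨z, hz, hzu⟩ := exists_infix_applyWord_of_mem_language_shiftImage hslp.nonErasing h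
    obtain ⟨a₀, b₀, hz', ha₀, hb₀⟩ := hslp.exists_extension_of_infix_applyWord hinj hℓs hℓw hzu
    exact ⟨a₀, b₀, mem_language_of_infix hz hz', ha₀, hb₀⟩
  · rintro ⟨a₀, b₀, hv, ha₀, hb₀⟩
    -- `d` may be the `ℓ` starting the next block, so `a₀ v b₀` needs one more letter on the right.
    obtain ⟨b₁, hb₁⟩ := exists_append_singleton_mem_language hv
    exact mem_language_of_infix (applyWord_mem_language_shiftImage hX hslp.nonErasing hb₁)
      (hslp.infix_applyWord_of_extension ha₀ hb₀)

/-- Proposition 3.3, the extensions of `u` are governed by those of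
its antecedent `v`. -/
theorem statement_3 {A B : Type*} [Fintype A] [Fintype B] [Nonempty B]
    (X : Set (ℤ → A)) (hX : IsShiftSpace X)
    (σ : A → List B) (ℓ : B)
    (hinj : Function.Injective (applyWord σ)) (hslp : StronglyLeftProper σ ℓ)
    (u : List B) (hu : u ∈ language (shiftImage σ X)) (hune : u ≠ []) (hl : ℓ ∈ u)
    (s p : List B) (v : List A) (a b : A)
    (hv : v ∈ language X) (hdec : u = s ++ applyWord σ v ++ p)
    (hab : (a, b) ∈ extBoth X v)
    (hs : s <:+ σ a) (hs' : s ≠ σ a) (hp : p ≠ []) (hp' : p <+: σ b) :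
    extBoth (shiftImage σ X) u =
      {q : B × B | ∃ a₀ b₀ : A, (a₀, b₀) ∈ extBoth X v ∧
        (q.1 :: s) <:+ σ a₀ ∧ (p ++ [q.2]) <+: (σ b₀ ++ [ℓ])} :=
  statement_3_general X hX σ ℓ hinj hslp u s p v a b hdec hs hs' hp hp'
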